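/- arXiv:0712.2387 — 4 statements merged into one kernel-verified Lean document; each statement's English description precedes it below -/
import Mathlib

section
/- The set 𝒢 of nondecreasing right-continuous functions g : [0,1) → [0,1], regarded as a subset of L²([0,1], dx) (identifying functions that agree Lebesgue-almost everywhere), is a compact subset of L²([0,1], dx) in the norm topology. -/
open Set MeasureTheory ENNReal

noncomputable section

instance : Fact ((1 : ℝ≥0∞) ≤ 2) := ⟨by norm_num⟩

/-- Lebesgue measure on `[0,1)`. -/
def leb01 : Measure ℝ := volume.restrict (Ico (0:ℝ) 1)

/-- The set `𝒢 ⊆ L²([0,1], dx)` of (classes of) nondecreasing right-continuous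
functions `g : [0,1) → [0,1]`. -/
def GG : Set (Lp ℝ 2 leb01) :=
  {f | ∃ g : ℝ → ℝ, MonotoneOn g (Ico (0:ℝ) 1) ∧
    (∀ t ∈ Ico (0:ℝ) 1, ContinuousWithinAt g (Ici t) t) ∧
    (∀ t ∈ Ico (0:ℝ) 1, g t ∈ Icc (0:ℝ) 1) ∧ ⇑f =ᵐ[leb01] g}

open Filter Topology
open scoped Finset

/-! Superlevel sets of a right-continuous nondecreasing `g` are half-lines `[T, 1)`, so rounding
`g` down to the grid `1/n` writes it, uniformly up to `1/n`, as an average of `n` indicators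
`1_[T, ∞)`. As `t ↦ 1_[t, ∞)` is `1/2`-Hölder into `L²`, `𝒢` lies in the closed convex hull of a
compact set and is totally bounded. It is closed: an `L²`-limit of elements of `𝒢` is an a.e.
limit of a subsequence, hence monotone with values in `[0, 1]` on a conull set, and the right
limits of a monotone extension agree with it off the countably many discontinuities. -/

instance : IsProbabilityMeasure leb01 :=
  ⟨by rw [leb01, Measure.restrict_apply_univ, Real.volume_Ico]; norm_num⟩

instance : NullSingletonClass leb01 := by unfold leb01; infer_instance

lemma abs_sub_card_div_le {y : ℝ} (hy : y ∈ Icc (0:ℝ) 1) {n : ℕ} (hn : 0 < n) :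
    |y - (#{j : Fin n | ((j:ℝ) + 1) / n ≤ y} : ℝ) / n| ≤ (n:ℝ)⁻¹ := by
  have hn' : (0:ℝ) < n := by exact_mod_cast hn
  have hfloor : ⌊n * y⌋₊ ≤ n := Nat.floor_le_of_le (by nlinarith [hy.2])
  have hcard : #{j : Fin n | ((j:ℝ) + 1) / n ≤ y} = ⌊n * y⌋₊ := by
    have hlt_floor : ∀ j : Fin n, ((j:ℝ) + 1) / n ≤ y ↔ (j:ℕ) < ⌊n * y⌋₊ := by
      intro j
      rw [div_le_iff₀ hn', Nat.lt_iff_add_one_le, Nat.le_floor_iff' (Nat.succ_ne_zero _)]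
      push_cast
      rw [mul_comm]
    simp_rw [hlt_floor, Fin.card_filter_val_lt, min_eq_right hfloor]
  have hle : (⌊n * y⌋₊ : ℝ) / n ≤ y := by
    rw [div_le_iff₀ hn']
    linarith [Nat.floor_le (mul_nonneg hn'.le hy.1)]
  have hlt : y - (n:ℝ)⁻¹ < ⌊n * y⌋₊ / n := by
    rw [lt_div_iff₀ hn', sub_mul, inv_mul_cancel₀ hn'.ne']
    linarith [Nat.sub_one_lt_floor (n * y)]
  rw [hcard, abs_le]
  constructor <;> linarith [inv_pos.2 hn']

lemma MonotoneOn.exists_le_iff_le_apply {g : ℝ → ℝ} {a b : ℝ}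
    (hmono : MonotoneOn g (Ico a b)) (hab : a ≤ b)
    (hrc : ∀ t ∈ Ico a b, ContinuousWithinAt g (Ici t) t) (c : ℝ) :
    ∃ T ∈ Icc a b, ∀ x ∈ Ico a b, T ≤ x ↔ c ≤ g x := by
  set A := insert b {x ∈ Ico a b | c ≤ g x}
  have ha : a ∈ lowerBounds A := by
    rintro x (rfl | hx)
    exacts [hab, hx.1.1]
  have hA : BddBelow A := ⟨a, ha⟩
  refine ⟨sInf A, ⟨le_csInf (insert_nonempty _ _) ha, csInf_le hA (mem_insert _ _)⟩,
    fun x hx => ?_⟩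
  refine ⟨fun hTx => ?_, fun h => csInf_le hA (mem_insert_of_mem _ ⟨hx, h⟩)⟩
  have hright : ∀ y ∈ Ioo x b, c ≤ g y := by
    intro y hy
    obtain ⟨z, hzA, hzy⟩ := exists_lt_of_csInf_lt (insert_nonempty _ _) (hTx.trans_lt hy.1)
    rcases hzA with rfl | ⟨hz, hcz⟩
    · exact absurd hy.2 hzy.not_gt
    · exact hcz.trans (hmono hz ⟨hx.1.trans hy.1.le, hy.2⟩ hzy.le)
  exact ge_of_tendsto ((hrc x hx).mono Ioi_subset_Ici_self)
    (eventually_of_mem (Ioo_mem_nhdsGT hx.2) hright)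

lemma exists_sum_indicator_Ici_approx {g : ℝ → ℝ} (hmono : MonotoneOn g (Ico 0 1))
    (hrc : ∀ t ∈ Ico (0:ℝ) 1, ContinuousWithinAt g (Ici t) t)
    (hbdd : ∀ t ∈ Ico (0:ℝ) 1, g t ∈ Icc (0:ℝ) 1) {n : ℕ} (hn : 0 < n) :
    ∃ T : Fin n → ℝ, (∀ j, T j ∈ Icc 0 1) ∧ ∀ x ∈ Ico (0:ℝ) 1,
      |g x - ∑ j, (n:ℝ)⁻¹ * (Ici (T j)).indicator (fun _ => (1:ℝ)) x| ≤ (n:ℝ)⁻¹ := by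
  choose T hT hlevel using fun j : Fin n =>
    hmono.exists_le_iff_le_apply zero_le_one hrc (((j:ℝ) + 1) / n)
  refine ⟨T, hT, fun x hx => ?_⟩
  have hsum : ∑ j, (n:ℝ)⁻¹ * (Ici (T j)).indicator (fun _ => (1:ℝ)) x
      = (#{j : Fin n | ((j:ℝ) + 1) / n ≤ g x} : ℝ) / n := by
    simp_rw [← Finset.mul_sum, indicator_apply, mem_Ici, hlevel _ x hx, Finset.sum_boole,
      inv_mul_eq_div]
  rw [hsum]
  exact abs_sub_card_div_le (hbdd x hx) hn

def indicatorIci (t : ℝ) : Lp ℝ 2 leb01 :=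
  indicatorConstLp 2 (measurableSet_Ici (a := t)) (measure_ne_top _ _) 1

lemma holderWith_indicatorIci : HolderWith 1 (1/2) indicatorIci := by
  intro s t
  wlog hst : s ≤ t generalizing s t
  · rw [edist_comm, edist_comm s]
    exact this t s (le_of_not_ge hst)
  rw [indicatorIci, indicatorIci, edist_indicatorConstLp_eq_enorm]
  refine enorm_indicatorConstLp_le.trans ?_
  rw [symmDiff_of_ge (Ici_subset_Ici.2 hst), Ici_sdiff_Ici, enorm_one, one_mul, ENNReal.coe_one,
    one_mul, edist_dist, Real.dist_eq, abs_sub_comm, abs_of_nonneg (sub_nonneg.2 hst)]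
  simp only [ENNReal.toReal_ofNat, NNReal.coe_div, NNReal.coe_one, NNReal.coe_ofNat]
  gcongr
  exact (Measure.restrict_le_self _).trans_eq Real.volume_Ico

lemma coeFn_sum_smul_indicatorIci {ι : Type*} (s : Finset ι) (c : ℝ) (T : ι → ℝ) :
    ⇑(∑ j ∈ s, c • indicatorIci (T j)) =ᵐ[leb01]
      fun x => ∑ j ∈ s, c * (Ici (T j)).indicator (fun _ => (1:ℝ)) x := by
  rw [← Finset.smul_sum]
  filter_upwards [Lp.coeFn_smul c (∑ j ∈ s, indicatorIci (T j)),
    Lp.coeFn_finsetSum s (fun j => indicatorIci (T j)),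
    (eventually_all_finset s).2 fun j _ =>
      (indicatorConstLp_coeFn : ⇑(indicatorIci (T j)) =ᵐ[leb01] _)]
    with x hsmul hsum hind
  rw [hsmul, Pi.smul_apply, hsum, Finset.sum_apply, smul_eq_mul, Finset.mul_sum]
  exact Finset.sum_congr rfl fun j hj => congrArg (c * ·) (hind j hj)

lemma GG_subset_closure_convexHull :
    GG ⊆ closure (convexHull ℝ (indicatorIci '' Icc 0 1)) := by
  rintro f ⟨g, hmono, hrc, hbdd, hfg⟩
  refine Metric.mem_closure_iff.2 fun ε hε => ?_
  obtain ⟨n, hn⟩ := exists_nat_gt ε⁻¹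
  have hn0 : 0 < n := by exact_mod_cast (inv_pos.2 hε).trans hn
  obtain ⟨T, hT, happrox⟩ := exists_sum_indicator_Ici_approx hmono hrc hbdd hn0
  refine ⟨∑ j, (n:ℝ)⁻¹ • indicatorIci (T j), ?_, ?_⟩
  · refine (convex_convexHull ℝ _).sum_mem (fun _ _ => by positivity) ?_
      fun j _ => subset_convexHull ℝ _ (mem_image_of_mem _ (hT j))
    rw [Finset.sum_const, Finset.card_univ, Fintype.card_fin, nsmul_eq_mul,
      mul_inv_cancel₀ (Nat.cast_ne_zero.2 hn0.ne')]
  · rw [dist_eq_norm]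
    calc ‖f - ∑ j, (n:ℝ)⁻¹ • indicatorIci (T j)‖ ≤ (n:ℝ)⁻¹ := by
          refine (Lp.norm_le_of_ae_bound (C := (n:ℝ)⁻¹) (by positivity) ?_).trans_eq
            (by simp [measureUnivNNReal])
          filter_upwards [Lp.coeFn_sub f _, hfg, coeFn_sum_smul_indicatorIci Finset.univ _ T,
            ae_restrict_mem measurableSet_Ico] with x hsub hf hS hx
          rw [hsub, Pi.sub_apply, hf, hS, Real.norm_eq_abs]
          exact happrox x hx
      _ < ε := inv_lt_of_inv_lt₀ hε hn

lemma GG_totallyBounded : TotallyBounded GG :=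
  ((isCompact_Icc.image (holderWith_indicatorIci.continuous one_half_pos)).totallyBounded
    |>.convexHull.closure).subset GG_subset_closure_convexHull

lemma exists_stieltjesFunction_ae_eq {μ : Measure ℝ} [NullSingletonClass μ] {h : ℝ → ℝ}
    {S : Set ℝ} {a b : ℝ} (hab : a ≤ b) (hS : ∀ᵐ x ∂μ, x ∈ S) (hmono : MonotoneOn h S)
    (hmaps : MapsTo h S (Icc a b)) :
    ∃ G : StieltjesFunction ℝ, (∀ x, G x ∈ Icc a b) ∧ h =ᵐ[μ] G := by
  obtain ⟨g, hg, hgh⟩ := hmono.exists_monotone_extension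
    ⟨a, forall_mem_image.2 fun x hx => (hmaps hx).1⟩
    ⟨b, forall_mem_image.2 fun x hx => (hmaps hx).2⟩
  set g' : ℝ → ℝ := fun x => max a (min b (g x))
  have hg' : Monotone g' := fun x y hxy => max_le_max le_rfl (min_le_min le_rfl (hg hxy))
  have hg'maps : ∀ x, g' x ∈ Icc a b := fun x => ⟨le_max_left _ _, max_le hab (min_le_left _ _)⟩
  have hhg' : EqOn h g' S := fun x hx => by
    simp only [g', ← hgh hx, min_eq_right (hmaps hx).2, max_eq_right (hmaps hx).1]
  refine ⟨hg'.stieltjesFunction, fun x => ⟨(hg'maps x).1.trans (hg'.le_rightLim le_rfl),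
    (hg'.rightLim_le (lt_add_one x)).trans (hg'maps _).2⟩, ?_⟩
  have hcont : ∀ᵐ x ∂μ, ContinuousAt g' x := hg'.countable_not_continuousAt.measure_zero μ
  filter_upwards [hS, hcont] with x hx hcx
  rw [hhg' hx, Monotone.stieltjesFunction_eq, hcx.continuousWithinAt.rightLim_eq]

lemma mem_GG_of_monotoneOn_ae {f : Lp ℝ 2 leb01} {S : Set ℝ} (hS : ∀ᵐ x ∂leb01, x ∈ S)
    (hmono : MonotoneOn f S) (hmaps : MapsTo f S (Icc 0 1)) : f ∈ GG := by
  obtain ⟨G, hG, hfG⟩ := exists_stieltjesFunction_ae_eq zero_le_one hS hmono hmaps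
  exact ⟨G, G.mono.monotoneOn _, fun t _ => G.right_continuous t, fun t _ => hG t, hfG⟩

lemma GG_isClosed : IsClosed GG := by
  refine IsSeqClosed.isClosed fun u f hu hlim => ?_
  choose g hmono _ hbdd hug using hu
  obtain ⟨φ, -, hφ⟩ := (tendstoInMeasure_of_tendsto_Lp hlim).exists_seq_tendsto_ae
  refine mem_GG_of_monotoneOn_ae
    (S := {x | x ∈ Ico (0:ℝ) 1 ∧ Tendsto (fun k => g (φ k) x) atTop (𝓝 (f x))}) ?_ ?_ ?_
  · filter_upwards [ae_restrict_mem measurableSet_Ico, hφ, ae_all_iff.2 fun k => hug (φ k)]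
      with x hx hfx hfg
    exact ⟨hx, hfx.congr hfg⟩
  · intro x hx y hy hxy
    exact le_of_tendsto_of_tendsto' hx.2 hy.2 fun k => hmono (φ k) hx.1 hy.1 hxy
  · intro x hx
    exact isClosed_Icc.mem_of_tendsto hx.2 (Eventually.of_forall fun k => hbdd (φ k) x hx.1)

/-- `𝒢` is a compact subset of `L²([0,1], dx)` in the norm topology. -/
theorem GG_isCompact : IsCompact GG :=
  GG_totallyBounded.isCompact_of_isClosed GG_isClosed
end
end

section
/- The map ρ : 𝒢 → 𝒫([0,1]) sending g to the pushforward g_*(Leb|_{[0,1)}) of Lebesgue measure on [0,1) under g is a bijection from 𝒢 onto the set 𝒫([0,1]) of Borel probability measures on [0,1], and ρ is a homeomorphism when 𝒢 is equipped with the L²([0,1], dx)-metric and 𝒫([0,1]) with the topology of weak convergence of probability measures. -/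
/-!
The inverse of `ρ` is the quantile map `P ↦ q_P`, `q_P(t) = inf {x | t < F_P(x)}`. For a
nondecreasing right-continuous `g` on `[0,1)` with law `g_* Leb` of distribution function `F`,
`g(t) ≤ x` holds iff `t < F(y)` for every `y > x`; `q_P` is characterised by the same relation with
`F = F_P`. This shows at once that `q_P` pushes Lebesgue measure forward to `P` and that `g` is
the quantile function of its own law.

`ρ` is continuous because `L²` convergence gives a.e. convergence along subsequences, and then
dominated convergence applies to `φ ∘ g`. Conversely, weak convergence `P_n → P` gives
`F_n(x) → F(x)` at every non-atom `x` of `P` (portmanteau), hence `q_{P_n}(t) → q_P(t)` at every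
continuity point of the monotone function `q_P`, i.e. almost everywhere; as all quantile functions
take values in `[0,1]`, Vitali's theorem upgrades this to `L²` convergence.
-/

open Set MeasureTheory ENNReal

noncomputable section

open ProbabilityTheory Filter Topology

theorem MeasureTheory.ProbabilityMeasure.tendsto_map_of_tendstoInMeasure {α E X : Type*}
    [MeasurableSpace α] [PseudoMetricSpace E] [MeasurableSpace E] [OpensMeasurableSpace E]
    [TopologicalSpace X] [MeasurableSpace X] [BorelSpace X]
    (μ : ProbabilityMeasure α) {π : E → X} (hπ : Continuous π) {f : ℕ → α → E} {g : α → E}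
    (hf : ∀ n, AEMeasurable (f n) μ) (hg : AEMeasurable g μ)
    (hfg : TendstoInMeasure (μ : Measure α) f atTop g) :
    Tendsto (fun n => μ.map (hπ.measurable.comp_aemeasurable (hf n))) atTop
      (𝓝 (μ.map (hπ.measurable.comp_aemeasurable hg))) := by
  rw [ProbabilityMeasure.tendsto_iff_forall_integral_tendsto]
  intro φ
  simp_rw [ProbabilityMeasure.toMeasure_map, integral_map (hπ.measurable.comp_aemeasurable (hf _))
    φ.continuous.measurable.aestronglyMeasurable,
    integral_map (hπ.measurable.comp_aemeasurable hg) φ.continuous.measurable.aestronglyMeasurable]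
  refine tendsto_of_subseq_tendsto fun ns hns => ?_
  obtain ⟨ms, -, hms⟩ := (hfg.comp hns).exists_seq_tendsto_ae
  refine ⟨ms, tendsto_integral_of_dominated_convergence (fun _ => ‖φ‖)
    (fun _ => ((φ.continuous.comp hπ).measurable.comp_aemeasurable (hf _)).aestronglyMeasurable)
    (integrable_const _) (fun _ => ae_of_all _ fun _ => φ.norm_coe_le_norm _) ?_⟩
  filter_upwards [hms] with x hx
  exact ((φ.continuous.comp hπ).tendsto _).comp hx

theorem MeasureTheory.ProbabilityMeasure.tendsto_cdf_of_tendsto {ι : Type*} {l : Filter ι}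
    {μs : ι → ProbabilityMeasure ℝ} {μ : ProbabilityMeasure ℝ} (h : Tendsto μs l (𝓝 μ)) {x : ℝ}
    (hx : (μ : Measure ℝ) {x} = 0) :
    Tendsto (fun i => cdf (μs i) x) l (𝓝 (cdf μ x)) := by
  have key := ProbabilityMeasure.tendsto_measure_of_null_frontier_of_tendsto' h
    (E := Iic x) (by rwa [frontier_Iic])
  simp_rw [cdf_eq_real, measureReal_def]
  exact (ENNReal.tendsto_toReal (measure_ne_top _ _)).comp key

lemma MeasureTheory.Measure.exists_mem_Ioo_measure_singleton_eq_zero (μ : Measure ℝ) [SFinite μ]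
    {a b : ℝ} (hab : a < b) : ∃ x ∈ Ioo a b, μ {x} = 0 := by
  have hatoms : {x : ℝ | 0 < μ {x}}.Countable :=
    Measure.countable_meas_pos_of_disjoint_iUnion (fun x => measurableSet_singleton x)
      fun x y hxy => disjoint_singleton.2 hxy
  obtain ⟨x, hx, hxab⟩ := (hatoms.dense_compl ℝ).exists_between hab
  exact ⟨x, hxab, nonpos_iff_eq_zero.1 (not_lt.1 hx)⟩

lemma MeasureTheory.unifIntegrable_of_forall_nnnorm_le {ι α β : Type*} [MeasurableSpace α]
    {μ : Measure α} [NormedAddCommGroup β] {p : ℝ≥0∞} (hp : 1 ≤ p) (hp' : p ≠ ∞) {f : ι → α → β}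
    (hf : ∀ i, AEStronglyMeasurable (f i) μ) {C : NNReal} (hC : ∀ i x, ‖f i x‖₊ ≤ C) :
    UnifIntegrable f p μ :=
  unifIntegrable_of hp hp' hf fun _ _ => ⟨C + 1, fun i => by
    have : {x | C + 1 ≤ ‖f i x‖₊}.indicator (f i) = 0 := funext fun x =>
      indicator_of_notMem (s := {x | C + 1 ≤ ‖f i x‖₊})
        (fun hx : C + 1 ≤ ‖f i x‖₊ => (hC i x).not_gt ((lt_add_one C).trans_le hx)) _
    rw [this, eLpNorm_zero]
    exact zero_le⟩

instance inst_s2 : IsProbabilityMeasure leb01 := ⟨by simp [leb01]⟩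

lemma ofReal_le_leb01 {S : Set ℝ} {a : ℝ} (ha : a ≤ 1)
    (h : ∀ t ∈ Ico (0:ℝ) 1, t < a → t ∈ S) : ENNReal.ofReal a ≤ leb01 S :=
  calc ENNReal.ofReal a = volume (Ico 0 a) := by simp
    _ ≤ volume (S ∩ Ico 0 1) := measure_mono fun t ht =>
        ⟨h t ⟨ht.1, ht.2.trans_le ha⟩ ht.2, ht.1, ht.2.trans_le ha⟩
    _ = leb01 S := (Measure.restrict_apply' measurableSet_Ico).symm

lemma leb01_le_ofReal {S : Set ℝ} {a : ℝ} (h : ∀ t ∈ Ico (0:ℝ) 1, t ∈ S → t ≤ a) :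
    leb01 S ≤ ENNReal.ofReal a :=
  calc leb01 S = volume (S ∩ Ico 0 1) := Measure.restrict_apply' measurableSet_Ico
    _ ≤ volume (Icc 0 a) := measure_mono fun t ht => ⟨ht.2.1, h t ht.2 ht.1⟩
    _ = ENNReal.ofReal a := by simp

lemma leb01_compl_Ico : leb01 (Ico (0:ℝ) 1)ᶜ = 0 :=
  ae_iff.1 (ae_restrict_mem measurableSet_Ico)

section Cdf

variable {μ : Measure ℝ} [IsProbabilityMeasure μ] {x : ℝ}

lemma cdf_eq_zero_of_neg (hs : μ (Icc (0:ℝ) 1)ᶜ = 0) (hx : x < 0) : cdf μ x = 0 := by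
  have : μ (Iic x) = 0 := measure_mono_null
    (fun y (hy : y ≤ x) (hy' : y ∈ Icc (0:ℝ) 1) => hy'.1.not_gt (hy.trans_lt hx)) hs
  rw [cdf_eq_real, measureReal_def, this, toReal_zero]

lemma cdf_eq_one_of_one_le (hs : μ (Icc (0:ℝ) 1)ᶜ = 0) (hx : 1 ≤ x) : cdf μ x = 1 := by
  have hIcc : μ (Icc 0 1) = 1 := (prob_compl_eq_zero_iff measurableSet_Icc).1 hs
  have : μ (Iic x) = 1 := le_antisymm prob_le_one (hIcc ▸ measure_mono fun y hy => hy.2.trans hx)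
  rw [cdf_eq_real, measureReal_def, this, toReal_one]

end Cdf

/-- The right-continuous quantile function `t ↦ inf {x | t < F_μ x}`, with the infimum taken in
`[0,1]` so that it is `[0,1]`-valued for every `t`. -/
def quantile (μ : Measure ℝ) (t : ℝ) : ℝ := sInf ({x ∈ Icc (0:ℝ) 1 | t < cdf μ x} ∪ {1})

section Quantile

variable {μ : Measure ℝ} {t x : ℝ}

lemma quantile_set_subset_Icc : {x ∈ Icc (0:ℝ) 1 | t < cdf μ x} ∪ {1} ⊆ Icc 0 1 :=
  union_subset (sep_subset _ _) (singleton_subset_iff.2 (right_mem_Icc.2 zero_le_one))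

lemma quantile_set_nonempty : ({x ∈ Icc (0:ℝ) 1 | t < cdf μ x} ∪ {1}).Nonempty :=
  ⟨1, Or.inr rfl⟩

lemma quantile_set_bddBelow : BddBelow ({x ∈ Icc (0:ℝ) 1 | t < cdf μ x} ∪ {1}) :=
  bddBelow_Icc.mono quantile_set_subset_Icc

lemma quantile_mem_Icc : quantile μ t ∈ Icc 0 1 :=
  ⟨le_csInf quantile_set_nonempty fun _ hy => (quantile_set_subset_Icc hy).1,
    csInf_le quantile_set_bddBelow (Or.inr rfl)⟩

lemma monotone_quantile : Monotone (quantile μ) := fun _ _ hst =>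
  csInf_le_csInf quantile_set_bddBelow quantile_set_nonempty
    (union_subset_union_left _ fun _ hx => ⟨hx.1, hst.trans_lt hx.2⟩)

lemma measurable_quantile : Measurable (quantile μ) := monotone_quantile.measurable

lemma norm_quantile_le_one : ‖quantile μ t‖ ≤ 1 :=
  abs_le.2 ⟨by linarith [(quantile_mem_Icc (μ := μ) (t := t)).1], quantile_mem_Icc.2⟩

lemma memLp_quantile (p : ℝ≥0∞) : MemLp (quantile μ) p leb01 :=
  MemLp.of_bound measurable_quantile.aestronglyMeasurable 1 <| ae_of_all _ fun _ =>
    norm_quantile_le_one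

lemma quantile_le_of_mem_Icc_of_lt_cdf (hx : x ∈ Icc 0 1) (h : t < cdf μ x) :
    quantile μ t ≤ x :=
  csInf_le quantile_set_bddBelow (Or.inl ⟨hx, h⟩)

lemma continuousWithinAt_quantile (ht : t < 1) : ContinuousWithinAt (quantile μ) (Ici t) t := by
  refine tendsto_order.2 ⟨fun a ha => eventually_nhdsWithin_of_forall fun s hs =>
    ha.trans_le (monotone_quantile hs), fun b hb => ?_⟩
  obtain ⟨s, hts, hsb⟩ : ∃ s, t < s ∧ quantile μ s < b := by
    obtain ⟨z, hz, hzb⟩ := exists_lt_of_csInf_lt quantile_set_nonempty hb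
    rcases hz with ⟨hz, htz⟩ | rfl
    · obtain ⟨s, hts, hsz⟩ := exists_between htz
      exact ⟨s, hts, (quantile_le_of_mem_Icc_of_lt_cdf hz hsz).trans_lt hzb⟩
    · exact ⟨1, ht, quantile_mem_Icc.2.trans_lt hzb⟩
  filter_upwards [Ico_mem_nhdsGE hts] with u hu
  exact (monotone_quantile hu.2.le).trans_lt hsb

variable [IsProbabilityMeasure μ] (hs : μ (Icc (0:ℝ) 1)ᶜ = 0)
include hs

lemma quantile_le_iff (ht : t ∈ Ico (0:ℝ) 1) :
    quantile μ t ≤ x ↔ ∀ y, x < y → t < cdf μ y := by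
  refine ⟨fun hq y hy => ?_, fun h => le_of_forall_gt_imp_ge_of_dense fun y hy => ?_⟩
  · obtain ⟨z, hz, hzy⟩ := exists_lt_of_csInf_lt quantile_set_nonempty (hq.trans_lt hy)
    rcases hz with ⟨-, hz⟩ | rfl
    · exact hz.trans_le (monotone_cdf μ hzy.le)
    · rw [cdf_eq_one_of_one_le hs hzy.le]
      exact ht.2
  · rcases le_or_gt y 1 with hy1 | hy1
    · refine quantile_le_of_mem_Icc_of_lt_cdf ⟨le_of_not_gt fun hy0 => ?_, hy1⟩ (h y hy)
      have := h y hy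
      rw [cdf_eq_zero_of_neg hs hy0] at this
      exact this.not_ge ht.1
    · exact quantile_mem_Icc.2.trans hy1.le

lemma quantile_le_of_lt_cdf (ht : t ∈ Ico (0:ℝ) 1) (h : t < cdf μ x) : quantile μ t ≤ x :=
  (quantile_le_iff hs ht).2 fun _ hy => h.trans_le (monotone_cdf μ hy.le)

lemma le_cdf_of_quantile_le (ht : t ∈ Ico (0:ℝ) 1) (h : quantile μ t ≤ x) : t ≤ cdf μ x :=
  ge_of_tendsto (((cdf μ).right_continuous x).mono Ioi_subset_Ici_self) <|
    eventually_nhdsWithin_of_forall fun _ hy => ((quantile_le_iff hs ht).1 h _ hy).le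

theorem map_quantile : leb01.map (quantile μ) = μ := by
  have := Measure.isProbabilityMeasure_map (μ := leb01)
    (measurable_quantile (μ := μ)).aemeasurable
  refine Measure.ext_of_Iic _ _ fun x => ?_
  rw [Measure.map_apply measurable_quantile measurableSet_Iic, ← ofReal_cdf]
  exact le_antisymm (leb01_le_ofReal fun t ht h => le_cdf_of_quantile_le hs ht h)
    (ofReal_le_leb01 (cdf_le_one μ x) fun t ht h => quantile_le_of_lt_cdf hs ht h)

end Quantile

section Representative

variable {g : ℝ → ℝ} {t y : ℝ}

lemma ofReal_cdf_map (hg : AEMeasurable g leb01) (y : ℝ) :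
    ENNReal.ofReal (cdf (leb01.map g) y) = leb01 (g ⁻¹' Iic y) := by
  have := Measure.isProbabilityMeasure_map hg
  rw [ofReal_cdf, Measure.map_apply_of_aemeasurable hg measurableSet_Iic]

lemma aemeasurable_of_monotoneOn (hmono : MonotoneOn g (Ico (0:ℝ) 1)) : AEMeasurable g leb01 :=
  aemeasurable_restrict_of_monotoneOn measurableSet_Ico hmono

variable (hmono : MonotoneOn g (Ico (0:ℝ) 1)) (ht : t ∈ Ico (0:ℝ) 1)
include hmono ht

lemma lt_cdf_map_of_lt (hrc : ContinuousWithinAt g (Ici t) t) (hy : g t < y) :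
    t < cdf (leb01.map g) y := by
  obtain ⟨u, htu, hu⟩ := mem_nhdsGE_iff_exists_Ico_subset.1 (hrc (Iio_mem_nhds hy))
  have hle : ENNReal.ofReal (min u 1) ≤ leb01 (g ⁻¹' Iic y) := by
    refine ofReal_le_leb01 (min_le_right _ _) fun v hv hvu => ?_
    rcases lt_or_ge v t with hvt | htv
    · exact (hmono hv ht hvt.le).trans hy.le
    · exact (show g v < y from hu ⟨htv, hvu.trans_le (min_le_left _ _)⟩).le
  rw [← ofReal_cdf_map (aemeasurable_of_monotoneOn hmono),
    ENNReal.ofReal_le_ofReal_iff (cdf_nonneg _ _)] at hle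
  exact (lt_min htu ht.2).trans_le hle

lemma le_of_lt_cdf_map (h : t < cdf (leb01.map g) y) : g t ≤ y := by
  by_contra! hy
  have hle : leb01 (g ⁻¹' Iic y) ≤ ENNReal.ofReal t :=
    leb01_le_ofReal fun u hu hgu =>
      le_of_not_gt fun htu => hy.not_ge ((hmono ht hu htu.le).trans hgu)
  rw [← ofReal_cdf_map (aemeasurable_of_monotoneOn hmono),
    ENNReal.ofReal_le_ofReal_iff ht.1] at hle
  exact h.not_ge hle

end Representative

theorem eqOn_quantile_map {g : ℝ → ℝ} (hmono : MonotoneOn g (Ico (0:ℝ) 1))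
    (hrc : ∀ t ∈ Ico (0:ℝ) 1, ContinuousWithinAt g (Ici t) t)
    (hval : ∀ t ∈ Ico (0:ℝ) 1, g t ∈ Icc (0:ℝ) 1) :
    EqOn g (quantile (leb01.map g)) (Ico 0 1) := by
  intro t ht
  have hg := aemeasurable_of_monotoneOn hmono
  have := Measure.isProbabilityMeasure_map hg
  have hs : leb01.map g (Icc 0 1)ᶜ = 0 := by
    rw [Measure.map_apply_of_aemeasurable hg measurableSet_Icc.compl]
    exact measure_mono_null (fun u hu hu' => hu (hval u hu')) leb01_compl_Ico
  refine eq_of_forall_ge_iff fun x => ?_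
  rw [quantile_le_iff hs ht]
  exact ⟨fun h y hy => lt_cdf_map_of_lt hmono ht (hrc t ht) (h.trans_lt hy),
    fun h => le_of_forall_gt_imp_ge_of_dense fun y hy => le_of_lt_cdf_map hmono ht (h y hy)⟩

lemma measurable_projIcc_comp (f : Lp ℝ 2 leb01) :
    Measurable fun t => projIcc (0:ℝ) 1 zero_le_one (f t) :=
  continuous_projIcc.measurable.comp (Lp.stronglyMeasurable f).measurable

/-- `ρ`, extended to all of `L²` by clamping values into `[0,1]`. -/
def pushforwardIcc (f : Lp ℝ 2 leb01) : ProbabilityMeasure (Icc (0:ℝ) 1) :=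
  ProbabilityMeasure.map ⟨leb01, inferInstance⟩ (measurable_projIcc_comp f).aemeasurable

lemma toMeasure_pushforwardIcc (f : Lp ℝ 2 leb01) :
    (pushforwardIcc f : Measure (Icc (0:ℝ) 1)) =
      leb01.map fun t => projIcc (0:ℝ) 1 zero_le_one (f t) :=
  ProbabilityMeasure.toMeasure_map _ _

theorem continuous_pushforwardIcc : Continuous pushforwardIcc :=
  continuous_iff_seqContinuous.2 fun _ _ h =>
    ProbabilityMeasure.tendsto_map_of_tendstoInMeasure _ continuous_projIcc
      (fun _ => (Lp.stronglyMeasurable _).measurable.aemeasurable)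
      (Lp.stronglyMeasurable _).measurable.aemeasurable (tendstoInMeasure_of_tendsto_Lp h)

lemma integral_pushforwardIcc {f : Lp ℝ 2 leb01} {g : ℝ → ℝ} (hfg : ⇑f =ᵐ[leb01] g)
    (φ : C(Icc (0:ℝ) 1, ℝ)) :
    ∫ y, φ y ∂(pushforwardIcc f : Measure (Icc (0:ℝ) 1)) =
      ∫ t in Ico (0:ℝ) 1, φ (projIcc 0 1 zero_le_one (g t)) := by
  rw [toMeasure_pushforwardIcc, integral_map (measurable_projIcc_comp f).aemeasurable
    φ.continuous.aestronglyMeasurable]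
  exact integral_congr_ae (hfg.mono fun t ht => by simp only [ht])

def realLaw (P : ProbabilityMeasure (Icc (0:ℝ) 1)) : ProbabilityMeasure ℝ :=
  P.map continuous_subtype_val.measurable.aemeasurable

lemma realLaw_compl_Icc (P : ProbabilityMeasure (Icc (0:ℝ) 1)) :
    (realLaw P : Measure ℝ) (Icc 0 1)ᶜ = 0 := by
  rw [realLaw, ProbabilityMeasure.toMeasure_map,
    Measure.map_apply measurable_subtype_coe measurableSet_Icc.compl]
  simp

lemma realLaw_injective : Function.Injective realLaw := fun P Q h =>
  ProbabilityMeasure.toMeasure_injective <|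
    (MeasurableEmbedding.subtype_coe measurableSet_Icc).map_injective <| by
      simpa [realLaw] using congrArg ProbabilityMeasure.toMeasure h

lemma realLaw_pushforwardIcc {f : Lp ℝ 2 leb01} (hf : ∀ᵐ t ∂leb01, f t ∈ Icc (0:ℝ) 1) :
    (realLaw (pushforwardIcc f) : Measure ℝ) = leb01.map f := by
  rw [realLaw, ProbabilityMeasure.toMeasure_map, toMeasure_pushforwardIcc,
    Measure.map_map measurable_subtype_coe (measurable_projIcc_comp f)]
  exact Measure.map_congr (hf.mono fun t ht => by simp [projIcc_of_mem _ ht])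

theorem tendsto_quantile_of_tendsto_cdf {ι : Type*} {l : Filter ι} {μs : ι → Measure ℝ}
    [∀ i, IsProbabilityMeasure (μs i)] {μ : Measure ℝ} [IsProbabilityMeasure μ]
    (hs : ∀ i, μs i (Icc (0:ℝ) 1)ᶜ = 0) (h : μ (Icc (0:ℝ) 1)ᶜ = 0)
    (hcdf : ∀ x, μ {x} = 0 → Tendsto (fun i => cdf (μs i) x) l (𝓝 (cdf μ x)))
    {t : ℝ} (ht : t ∈ Ioo (0:ℝ) 1) (hc : ContinuousAt (quantile μ) t) :
    Tendsto (fun i => quantile (μs i) t) l (𝓝 (quantile μ t)) := by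
  have ht' : t ∈ Ico (0:ℝ) 1 := Ioo_subset_Ico_self ht
  refine tendsto_order.2 ⟨fun a ha => ?_, fun b hb => ?_⟩
  · obtain ⟨x, hx, hx0⟩ := Measure.exists_mem_Ioo_measure_singleton_eq_zero μ ha
    -- continuity of the quantile function at `t` rules out a flat piece of `F_μ` at level `t`
    have hFx : cdf μ x < t := by
      by_contra! hle
      refine hx.2.not_ge <|
        le_of_tendsto (hc.tendsto.mono_left (nhdsWithin_le_nhds (s := Iio t))) ?_
      filter_upwards [Ioo_mem_nhdsLT ht.1] with s hs
      exact quantile_le_of_lt_cdf h ⟨hs.1.le, hs.2.trans ht.2⟩ (hs.2.trans_le hle)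
    filter_upwards [(hcdf x hx0).eventually_lt_const hFx] with i hi
    exact hx.1.trans (lt_of_not_ge fun hq => hi.not_ge (le_cdf_of_quantile_le (hs i) ht' hq))
  · obtain ⟨x, hx, hx0⟩ := Measure.exists_mem_Ioo_measure_singleton_eq_zero μ hb
    have htF : t < cdf μ x := (quantile_le_iff h ht').1 le_rfl x hx.1
    filter_upwards [(hcdf x hx0).eventually_const_lt htF] with i hi
    exact (quantile_le_of_lt_cdf (hs i) ht' hi).trans_lt hx.2

theorem ae_tendsto_quantile_of_tendsto_cdf {ι : Type*} {l : Filter ι} {μs : ι → Measure ℝ}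
    [∀ i, IsProbabilityMeasure (μs i)] {μ : Measure ℝ} [IsProbabilityMeasure μ]
    (hs : ∀ i, μs i (Icc (0:ℝ) 1)ᶜ = 0) (h : μ (Icc (0:ℝ) 1)ᶜ = 0)
    (hcdf : ∀ x, μ {x} = 0 → Tendsto (fun i => cdf (μs i) x) l (𝓝 (cdf μ x))) :
    ∀ᵐ t ∂leb01, Tendsto (fun i => quantile (μs i) t) l (𝓝 (quantile μ t)) := by
  have hnull : volume ({t | ¬ContinuousAt (quantile μ) t} ∪ {0}) = 0 :=
    (monotone_quantile.countable_not_continuousAt.union (countable_singleton 0)).measure_zero _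
  filter_upwards [ae_restrict_mem measurableSet_Ico,
    ae_restrict_of_ae (measure_eq_zero_iff_ae_notMem.1 hnull)] with t ht htc
  simp only [mem_union, mem_singleton_iff, not_or] at htc
  exact tendsto_quantile_of_tendsto_cdf hs h hcdf ⟨ht.1.lt_of_ne' htc.2, ht.2⟩
    (not_not.1 htc.1)

def quantileLp (P : ProbabilityMeasure (Icc (0:ℝ) 1)) : Lp ℝ 2 leb01 :=
  (memLp_quantile 2).toLp (quantile (realLaw P))

lemma coeFn_quantileLp (P : ProbabilityMeasure (Icc (0:ℝ) 1)) :
    ⇑(quantileLp P) =ᵐ[leb01] quantile (realLaw P) :=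
  (memLp_quantile 2).coeFn_toLp

lemma quantileLp_mem_GG (P : ProbabilityMeasure (Icc (0:ℝ) 1)) : quantileLp P ∈ GG :=
  ⟨quantile (realLaw P), monotone_quantile.monotoneOn _,
    fun _ ht => continuousWithinAt_quantile ht.2, fun _ _ => quantile_mem_Icc,
    coeFn_quantileLp P⟩

theorem continuous_quantileLp : Continuous quantileLp := by
  refine continuous_iff_seqContinuous.2 fun Ps P h => ?_
  have hcdf := fun x => ProbabilityMeasure.tendsto_cdf_of_tendsto (x := x)
    ((ProbabilityMeasure.continuous_map continuous_subtype_val).continuousAt.tendsto.comp h)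
  refine (Lp.tendsto_Lp_iff_tendsto_eLpNorm'' _ (fun _ => memLp_quantile 2) _
    (memLp_quantile 2)).2 ?_
  exact tendsto_Lp_finite_of_tendsto_ae one_le_two ofNat_ne_top
    (fun _ => measurable_quantile.aestronglyMeasurable) (memLp_quantile 2)
    (unifIntegrable_of_forall_nnnorm_le one_le_two ofNat_ne_top
      (fun _ => measurable_quantile.aestronglyMeasurable) (C := 1) fun _ _ => by
        simpa [← NNReal.coe_le_coe] using norm_quantile_le_one)
    (ae_tendsto_quantile_of_tendsto_cdf (fun _ => realLaw_compl_Icc _) (realLaw_compl_Icc P)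
      hcdf)

lemma quantileLp_pushforwardIcc {f : Lp ℝ 2 leb01} (hf : f ∈ GG) :
    quantileLp (pushforwardIcc f) = f := by
  obtain ⟨g, hmono, hrc, hval, hfg⟩ := hf
  have hlaw : (realLaw (pushforwardIcc f) : Measure ℝ) = leb01.map g := by
    rw [realLaw_pushforwardIcc, Measure.map_congr hfg]
    filter_upwards [hfg, ae_restrict_mem measurableSet_Ico] with t hft ht
    exact hft ▸ hval t ht
  refine Lp.ext ((coeFn_quantileLp _).trans ?_)
  rw [hlaw]
  filter_upwards [hfg, ae_restrict_mem measurableSet_Ico] with t hft ht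
  rw [hft]
  exact (eqOn_quantile_map hmono hrc hval ht).symm

lemma pushforwardIcc_quantileLp (P : ProbabilityMeasure (Icc (0:ℝ) 1)) :
    pushforwardIcc (quantileLp P) = P := by
  refine realLaw_injective (ProbabilityMeasure.toMeasure_injective ?_)
  rw [realLaw_pushforwardIcc ((coeFn_quantileLp P).mono fun _ ht => ht ▸ quantile_mem_Icc),
    Measure.map_congr (coeFn_quantileLp P), map_quantile (realLaw_compl_Icc P)]

def pushforwardHomeomorph : GG ≃ₜ ProbabilityMeasure (Icc (0:ℝ) 1) where
  toFun f := pushforwardIcc f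
  invFun P := ⟨quantileLp P, quantileLp_mem_GG P⟩
  left_inv f := Subtype.ext (quantileLp_pushforwardIcc f.2)
  right_inv := pushforwardIcc_quantileLp
  continuous_toFun := continuous_pushforwardIcc.comp continuous_subtype_val
  continuous_invFun := continuous_quantileLp.subtype_mk _

/-- The map `ρ : g ↦ g_*(Leb|_{[0,1)})` is a bijection from `𝒢` onto the Borel
probability measures on `[0,1]`, and it is a homeomorphism between `𝒢` with the
`L²`-metric and `𝒫([0,1])` with the topology of weak convergence: there is a
homeomorphism `ρ` such that, whenever `g` is a nondecreasing right-continuous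
`[0,1]`-valued representative of `f ∈ 𝒢`, the measure `ρ f` integrates every
continuous `φ : [0,1] → ℝ` to `∫_{[0,1)} φ(g(t)) dt`. -/
theorem pushforward_homeomorphism :
    ∃ ρ : GG ≃ₜ ProbabilityMeasure (Icc (0:ℝ) 1),
      ∀ (f : GG) (g : ℝ → ℝ), MonotoneOn g (Ico (0:ℝ) 1) →
        (∀ t ∈ Ico (0:ℝ) 1, ContinuousWithinAt g (Ici t) t) →
        (∀ t ∈ Ico (0:ℝ) 1, g t ∈ Icc (0:ℝ) 1) →
        ⇑(f : Lp ℝ 2 leb01) =ᵐ[leb01] g →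
        ∀ φ : C(Icc (0:ℝ) 1, ℝ),
          ∫ y, φ y ∂(ρ f : Measure (Icc (0:ℝ) 1)) =
            ∫ t in Ico (0:ℝ) 1, φ (projIcc 0 1 zero_le_one (g t)) :=
  ⟨pushforwardHomeomorph, fun _ _ _ _ _ hfg φ => integral_pushforwardIcc hfg φ⟩
end
end

section
/- Let β > 0, N ≥ 2 an integer, and let f : [0,1] → ℝ be three times continuously differentiable with f'(0) = f'(1) = 0. For x with 0 < x¹ < x² < ⋯ < x^{N−1} < 1 (and x⁰ = 0, x^N = 1), set G(x) := N·[ (β/N − 1)·(1/(N−1)) ∑_{i=1}^{N−1} ( 1/(x^i − x^{i−1}) − 1/(x^{i+1} − x^i) ) f'(x^i) + (1/(N−1)) ∑_{i=1}^{N−1} f''(x^i) ]. Then |G(x)| ≤ ‖f''‖_∞ · N(β+1)/(N−1) + ‖f'''‖_∞ · N/(N−1), uniformly in x. -/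
/-!
Summation by parts, using `f'(x⁰) = f'(x^N) = 0`, turns the drift sum into `A = ∑ᵢ dᵢ`, the sum of
the slopes `dᵢ` of `f'` over the `N` gaps `[xⁱ, xⁱ⁺¹]`; with `B = ∑ᵢ f''(xⁱ)` the generator becomes
`N/(N-1) · (β/N · A - (A - B))`. Each `|dᵢ| ≤ ‖f''‖_∞`, so `|A| ≤ N ‖f''‖_∞`. By the mean value
theorem `dᵢ = f''(ξᵢ)` for some `ξᵢ` in the gap, so `|dᵢ - f''(xⁱ⁺¹)| ≤ ‖f'''‖_∞ (xⁱ⁺¹ - xⁱ)`; these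
errors telescope to at most `‖f'''‖_∞`, and `A - B` differs from their sum only by `f''(x^N)`.
-/

open Set Finset

theorem sum_Icc_one_eq_sum_range_succ {M : Type*} [AddCommMonoid M] (h : ℕ → M) (n : ℕ) :
    ∑ i ∈ Icc 1 n, h i = ∑ i ∈ range n, h (i + 1) := by
  rw [range_eq_Ico, sum_Ico_add' h, zero_add, Finset.Ico_add_one_right_eq_Icc]

section MeanValue

variable {s : Set ℝ} {g g' g'' : ℝ → ℝ} {C C' a b : ℝ}

theorem exists_slope_eq_of_hasDerivWithinAt (hs : Convex ℝ s)
    (hg : ∀ t ∈ s, HasDerivWithinAt g (g' t) s t) (ha : a ∈ s) (hb : b ∈ s) (hab : a < b) :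
    ∃ c ∈ Ioo a b, g' c = slope g a b := by
  have hsub : Icc a b ⊆ s := hs.ordConnected.out ha hb
  rw [slope_def_field]
  refine exists_hasDerivAt_eq_slope g g' hab
    (fun t ht => (hg t (hsub ht)).continuousWithinAt.mono hsub) fun t ht => ?_
  exact (hg t (hsub (Ioo_subset_Icc_self ht))).hasDerivAt
    (Filter.mem_of_superset (Ioo_mem_nhds ht.1 ht.2) (Ioo_subset_Icc_self.trans hsub))

theorem abs_slope_le_of_abs_deriv_le (hs : Convex ℝ s)
    (hg : ∀ t ∈ s, HasDerivWithinAt g (g' t) s t) (hC : ∀ t ∈ s, |g' t| ≤ C)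
    (ha : a ∈ s) (hb : b ∈ s) : |slope g a b| ≤ C := by
  rcases eq_or_ne a b with rfl | hab
  · simpa using (abs_nonneg _).trans (hC a ha)
  have hLip : |g b - g a| ≤ C * |b - a| :=
    hs.norm_image_sub_le_of_norm_hasDerivWithin_le hg hC ha hb
  rw [slope_def_field, abs_div]
  exact div_le_of_le_mul₀ (abs_nonneg _) ((abs_nonneg _).trans (hC a ha)) hLip

theorem abs_slope_sub_deriv_le (hs : Convex ℝ s)
    (hg : ∀ t ∈ s, HasDerivWithinAt g (g' t) s t) (hg' : ∀ t ∈ s, HasDerivWithinAt g' (g'' t) s t)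
    (hC : ∀ t ∈ s, |g'' t| ≤ C) (ha : a ∈ s) (hb : b ∈ s) (hab : a < b) :
    |slope g a b - g' b| ≤ C * (b - a) := by
  obtain ⟨c, hc, hgc⟩ := exists_slope_eq_of_hasDerivWithinAt hs hg ha hb hab
  have hcs : c ∈ s := hs.ordConnected.out ha hb (Ioo_subset_Icc_self hc)
  rw [← hgc]
  calc |g' c - g' b| ≤ C * |c - b| := hs.norm_image_sub_le_of_norm_hasDerivWithin_le hg' hC hb hcs
    _ ≤ C * (b - a) := by
      gcongr
      · exact (abs_nonneg _).trans (hC a ha)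
      · rw [abs_sub_comm, abs_of_pos (sub_pos.2 hc.2)]
        linarith [hc.1]

theorem abs_sum_slope_sub_deriv_le (hs : Convex ℝ s)
    (hg : ∀ t ∈ s, HasDerivWithinAt g (g' t) s t) (hg' : ∀ t ∈ s, HasDerivWithinAt g' (g'' t) s t)
    (hC : ∀ t ∈ s, |g'' t| ≤ C) {x : ℕ → ℝ} {n : ℕ} (hxs : ∀ i ≤ n, x i ∈ s)
    (hx : ∀ i < n, x i < x (i + 1)) :
    |∑ i ∈ range n, (slope g (x i) (x (i + 1)) - g' (x (i + 1)))| ≤ C * (x n - x 0) := by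
  calc |∑ i ∈ range n, (slope g (x i) (x (i + 1)) - g' (x (i + 1)))|
      ≤ ∑ i ∈ range n, |slope g (x i) (x (i + 1)) - g' (x (i + 1))| :=
        abs_sum_le_sum_abs _ _
    _ ≤ ∑ i ∈ range n, C * (x (i + 1) - x i) := by
        refine sum_le_sum fun i hi => ?_
        have hi : i < n := mem_range.1 hi
        exact abs_slope_sub_deriv_le hs hg hg' hC (hxs i hi.le) (hxs (i + 1) hi) (hx i hi)
    _ = C * (x n - x 0) := by rw [← mul_sum, sum_range_sub]

theorem abs_sum_slope_le (hs : Convex ℝ s)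
    (hg : ∀ t ∈ s, HasDerivWithinAt g (g' t) s t) (hC : ∀ t ∈ s, |g' t| ≤ C) {x : ℕ → ℝ} {n : ℕ}
    (hxs : ∀ i ≤ n, x i ∈ s) :
    |∑ i ∈ range n, slope g (x i) (x (i + 1))| ≤ n * C := by
  refine (abs_sum_le_sum_abs _ _).trans ?_
  simpa using sum_le_card_nsmul (range n) _ C fun i hi =>
    abs_slope_le_of_abs_deriv_le hs hg hC (hxs i (mem_range.1 hi).le) (hxs (i + 1) (mem_range.1 hi))

theorem abs_sum_slope_sub_sum_deriv_le (hs : Convex ℝ s)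
    (hg : ∀ t ∈ s, HasDerivWithinAt g (g' t) s t) (hg' : ∀ t ∈ s, HasDerivWithinAt g' (g'' t) s t)
    (hC' : ∀ t ∈ s, |g' t| ≤ C') (hC : ∀ t ∈ s, |g'' t| ≤ C) {x : ℕ → ℝ} {n : ℕ}
    (hxs : ∀ i ≤ n + 1, x i ∈ s) (hx : ∀ i < n + 1, x i < x (i + 1)) :
    |∑ i ∈ range (n + 1), slope g (x i) (x (i + 1)) - ∑ i ∈ Icc 1 n, g' (x i)|
      ≤ C' + C * (x (n + 1) - x 0) := by
  have hsplit : ∑ i ∈ range (n + 1), slope g (x i) (x (i + 1)) - ∑ i ∈ Icc 1 n, g' (x i)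
      = ∑ i ∈ range (n + 1), (slope g (x i) (x (i + 1)) - g' (x (i + 1))) + g' (x (n + 1)) := by
    rw [sum_sub_distrib, sum_range_succ (fun i => g' (x (i + 1))), sum_Icc_one_eq_sum_range_succ]
    ring
  rw [hsplit]
  calc _ ≤ |∑ i ∈ range (n + 1), (slope g (x i) (x (i + 1)) - g' (x (i + 1)))| + |g' (x (n + 1))| :=
        abs_add_le _ _
    _ ≤ C * (x (n + 1) - x 0) + C' :=
        add_le_add (abs_sum_slope_sub_deriv_le hs hg hg' hC hxs hx) (hC' _ (hxs _ le_rfl))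
    _ = C' + C * (x (n + 1) - x 0) := add_comm _ _

end MeanValue

theorem sum_Icc_inv_gap_sub_mul_eq_sum_slope (x : ℕ → ℝ) (g : ℝ → ℝ) (n : ℕ)
    (h0 : g (x 0) = 0) (hn : g (x (n + 1)) = 0) :
    ∑ i ∈ Icc 1 n, (1 / (x i - x (i - 1)) - 1 / (x (i + 1) - x i)) * g (x i)
      = ∑ i ∈ range (n + 1), slope g (x i) (x (i + 1)) := by
  simp only [slope_def_field, sub_div, sum_sub_distrib]
  rw [sum_range_succ, hn, sum_range_succ', h0, sum_Icc_one_eq_sum_range_succ]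
  simp only [zero_div, add_zero, ← sum_sub_distrib]
  refine sum_congr rfl fun i _ => ?_
  rw [Nat.add_sub_cancel]
  ring

theorem abs_generator_le {β N A B C2 C3 : ℝ} (hβ : 0 ≤ β) (hN : 1 < N)
    (hA : |A| ≤ N * C2) (hAB : |A - B| ≤ C2 + C3) :
    |N * ((β / N - 1) * (1 / (N - 1)) * A + (1 / (N - 1)) * B)|
      ≤ C2 * (N * (β + 1) / (N - 1)) + C3 * (N / (N - 1)) := by
  have hN0 : 0 < N := by linarith
  have hN1 : 0 < N - 1 := by linarith
  have hdrift : |β / N * A| ≤ β * C2 := by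
    rw [abs_mul, abs_of_nonneg (by positivity)]
    calc β / N * |A| ≤ β / N * (N * C2) := by gcongr
      _ = β * C2 := by field_simp
  have hsplit : N * ((β / N - 1) * (1 / (N - 1)) * A + (1 / (N - 1)) * B)
      = N / (N - 1) * (β / N * A - (A - B)) := by
    field_simp
    ring
  calc |N * ((β / N - 1) * (1 / (N - 1)) * A + (1 / (N - 1)) * B)|
      = N / (N - 1) * |β / N * A - (A - B)| := by
        rw [hsplit, abs_mul, abs_of_pos (by positivity)]
    _ ≤ N / (N - 1) * (β * C2 + (C2 + C3)) := by
        gcongr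
        exact (abs_sub _ _).trans (add_le_add hdrift hAB)
    _ = C2 * (N * (β + 1) / (N - 1)) + C3 * (N / (N - 1)) := by ring

theorem bessel_generator_bound_general (β : ℝ) (hβ : 0 < β) (N : ℕ) (hN : 2 ≤ N)
    (f' f'' f''' : ℝ → ℝ)
    (hf2 : ∀ t ∈ Icc (0:ℝ) 1, HasDerivWithinAt f' (f'' t) (Icc (0:ℝ) 1) t)
    (hf3 : ∀ t ∈ Icc (0:ℝ) 1, HasDerivWithinAt f'' (f''' t) (Icc (0:ℝ) 1) t)
    (hb0 : f' 0 = 0) (hb1 : f' 1 = 0)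
    (C2 C3 : ℝ)
    (hC2 : ∀ t ∈ Icc (0:ℝ) 1, |f'' t| ≤ C2)
    (hC3 : ∀ t ∈ Icc (0:ℝ) 1, |f''' t| ≤ C3)
    (x : ℕ → ℝ) (hx0 : x 0 = 0) (hxN : x N = 1)
    (hmono : ∀ i < N, x i < x (i + 1)) :
    |(N : ℝ) * ((β / N - 1) * (1 / ((N : ℝ) - 1)) *
        (∑ i ∈ Finset.Icc 1 (N - 1), (1 / (x i - x (i - 1)) - 1 / (x (i + 1) - x i)) * f' (x i))
      + (1 / ((N : ℝ) - 1)) * ∑ i ∈ Finset.Icc 1 (N - 1), f'' (x i))|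
      ≤ C2 * ((N : ℝ) * (β + 1) / ((N : ℝ) - 1)) + C3 * ((N : ℝ) / ((N : ℝ) - 1)) := by
  obtain ⟨n, rfl⟩ : ∃ n, N = n + 1 := ⟨N - 1, by omega⟩
  have hx01 : ∀ i ≤ n + 1, x i ∈ Icc (0:ℝ) 1 := fun i hi => by
    have hx := (strictMonoOn_Iic_of_lt_succ hmono).monotoneOn
    exact ⟨hx0 ▸ hx (Nat.zero_le _) hi (Nat.zero_le i), hxN ▸ hx hi (le_refl (n + 1)) hi⟩
  rw [Nat.add_sub_cancel,
    sum_Icc_inv_gap_sub_mul_eq_sum_slope x f' n (by rw [hx0, hb0]) (by rw [hxN, hb1])]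
  have hA := abs_sum_slope_le (convex_Icc 0 1) hf2 hC2 hx01
  have hAB := abs_sum_slope_sub_sum_deriv_le (convex_Icc 0 1) hf2 hf3 hC2 hC3 hx01 hmono
  rw [hx0, hxN, sub_zero, mul_one] at hAB
  exact abs_generator_le hβ.le (Nat.one_lt_cast.2 hN) hA hAB

/-- Uniform bound on `G(x) = N·L^N F^N(x)` for the interacting Bessel particle system:
if `f` is three times differentiable on `[0,1]` with `f'(0) = f'(1) = 0`, and
`C2`, `C3` bound `|f''|`, `|f'''|` on `[0,1]`, then for every strictly increasing
configuration `0 < x¹ < ⋯ < x^{N-1} < 1` (with `x⁰ = 0`, `x^N = 1`),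
`|G(x)| ≤ C2·N(β+1)/(N-1) + C3·N/(N-1)`. -/
theorem bessel_generator_bound (β : ℝ) (hβ : 0 < β) (N : ℕ) (hN : 2 ≤ N)
    (f f' f'' f''' : ℝ → ℝ)
    (hf1 : ∀ t ∈ Icc (0:ℝ) 1, HasDerivWithinAt f (f' t) (Icc (0:ℝ) 1) t)
    (hf2 : ∀ t ∈ Icc (0:ℝ) 1, HasDerivWithinAt f' (f'' t) (Icc (0:ℝ) 1) t)
    (hf3 : ∀ t ∈ Icc (0:ℝ) 1, HasDerivWithinAt f'' (f''' t) (Icc (0:ℝ) 1) t)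
    (hf3c : ContinuousOn f''' (Icc (0:ℝ) 1))
    (hb0 : f' 0 = 0) (hb1 : f' 1 = 0)
    (C2 C3 : ℝ)
    (hC2 : ∀ t ∈ Icc (0:ℝ) 1, |f'' t| ≤ C2)
    (hC3 : ∀ t ∈ Icc (0:ℝ) 1, |f''' t| ≤ C3)
    (x : ℕ → ℝ) (hx0 : x 0 = 0) (hxN : x N = 1)
    (hmono : ∀ i < N, x i < x (i + 1)) :
    |(N : ℝ) * ((β / N - 1) * (1 / ((N : ℝ) - 1)) *
        (∑ i ∈ Finset.Icc 1 (N - 1), (1 / (x i - x (i - 1)) - 1 / (x (i + 1) - x i)) * f' (x i))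
      + (1 / ((N : ℝ) - 1)) * ∑ i ∈ Finset.Icc 1 (N - 1), f'' (x i))|
      ≤ C2 * ((N : ℝ) * (β + 1) / ((N : ℝ) - 1)) + C3 * ((N : ℝ) / ((N : ℝ) - 1)) :=
  bessel_generator_bound_general β hβ N hN f' f'' f''' hf2 hf3 hb0 hb1 C2 C3 hC2 hC3 x hx0 hxN hmono
end

section
/- Let (Ω, 𝒟, μ) be a probability space and (ℱ_n)_{n∈ℕ} a sequence of sub-σ-algebras of 𝒟. Then the following are equivalent: (i) for every p ∈ [1,∞) and every f ∈ L^p(Ω, 𝒟, μ), the conditional expectations E[f | ℱ_n] converge to f in L^p as n → ∞; (ii) for every A ∈ 𝒟 there exists a sequence of sets A_n ∈ ℱ_n such that μ(A_n Δ A) → 0 as n → ∞. -/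
open MeasureTheory Filter Topology ENNReal

/-!
Forward: for `f = 1_A` and `p = 1`, `L¹` convergence gives convergence in measure, and the
`ℱ_n`-measurable sets `{E[1_A | ℱ_n] ≥ 1/2}` differ from `A` only where `E[1_A | ℱ_n]` is at
distance at least `1/2` from `1_A`.

Backward: conditional expectation is an `L^p` contraction, so
`‖E[f | ℱ] - f‖_p ≤ ‖E[g | ℱ] - g‖_p + 2 ‖f - g‖_p`. With `g = 1_{A_n} c`, which `E[· | ℱ_n]` fixes,
this gives convergence for `1_A c`; the error is subadditive in `f`, so convergence holds for simple
functions, and the same inequality carries it to their `L^p` closure.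
-/

open scoped symmDiff

namespace MeasureTheory

section CondExpError

variable {Ω E : Type*} [NormedAddCommGroup E] [NormedSpace ℝ E] [CompleteSpace E]
  {m m0 : MeasurableSpace Ω} {μ : Measure Ω} {p : ℝ≥0∞}

theorem eLpNorm_condExp_sub_le_add {f g : Ω → E} (hp : 1 ≤ p)
    (hf : Integrable f μ) (hg : Integrable g μ) :
    eLpNorm (μ[f|m] - f) p μ ≤ eLpNorm (μ[g|m] - g) p μ + 2 * eLpNorm (f - g) p μ := by
  have hsplit : μ[f|m] - f =ᵐ[μ] μ[f - g|m] + ((μ[g|m] - g) + (g - f)) := by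
    filter_upwards [condExp_sub hf hg m] with ω hω
    simp only [Pi.sub_apply, Pi.add_apply, hω]
    abel
  have hgap : AEStronglyMeasurable (μ[g|m] - g) μ :=
    integrable_condExp.aestronglyMeasurable.sub hg.aestronglyMeasurable
  calc eLpNorm (μ[f|m] - f) p μ
      = eLpNorm (μ[f - g|m] + ((μ[g|m] - g) + (g - f))) p μ := eLpNorm_congr_ae hsplit
    _ ≤ eLpNorm (μ[f - g|m]) p μ + (eLpNorm (μ[g|m] - g) p μ + eLpNorm (g - f) p μ) :=
        (eLpNorm_add_le integrable_condExp.aestronglyMeasurable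
          (hgap.add (hg.sub hf).aestronglyMeasurable) hp).trans
          (add_le_add_right (eLpNorm_add_le hgap (hg.sub hf).aestronglyMeasurable hp) _)
    _ ≤ eLpNorm (f - g) p μ + (eLpNorm (μ[g|m] - g) p μ + eLpNorm (f - g) p μ) := by
        rw [eLpNorm_sub_comm g f]
        gcongr
        exact eLpNorm_condExp_le_eLpNorm _ hp
    _ = eLpNorm (μ[g|m] - g) p μ + 2 * eLpNorm (f - g) p μ := by ring

theorem eLpNorm_condExp_sub_le_of_stronglyMeasurable (hm : m ≤ m0) [SigmaFinite (μ.trim hm)]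
    {f g : Ω → E} (hp : 1 ≤ p) (hf : Integrable f μ) (hg : Integrable g μ)
    (hgm : StronglyMeasurable[m] g) :
    eLpNorm (μ[f|m] - f) p μ ≤ 2 * eLpNorm (f - g) p μ := by
  simpa [condExp_of_stronglyMeasurable hm hgm hg] using
    eLpNorm_condExp_sub_le_add (m := m) hp hf hg

theorem eLpNorm_condExp_add_sub_le {f g : Ω → E} (hp : 1 ≤ p)
    (hf : Integrable f μ) (hg : Integrable g μ) :
    eLpNorm (μ[f + g|m] - (f + g)) p μ ≤ eLpNorm (μ[f|m] - f) p μ + eLpNorm (μ[g|m] - g) p μ := by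
  have hsplit : μ[f + g|m] - (f + g) =ᵐ[μ] (μ[f|m] - f) + (μ[g|m] - g) := by
    filter_upwards [condExp_add hf hg m] with ω hω
    simp only [Pi.sub_apply, Pi.add_apply, hω]
    abel
  rw [eLpNorm_congr_ae hsplit]
  exact eLpNorm_add_le (integrable_condExp.sub hf).aestronglyMeasurable
    (integrable_condExp.sub hg).aestronglyMeasurable hp

variable {ι : Type*} {l : Filter ι} {Fs : ι → MeasurableSpace Ω}

theorem tendsto_eLpNorm_condExp_sub_indicator [IsFiniteMeasure μ] (hle : ∀ i, Fs i ≤ m0)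
    (hp : 1 ≤ p) (hp_top : p ≠ ⊤) {A : Set Ω} (hA : MeasurableSet A) {As : ι → Set Ω}
    (hAs : ∀ i, MeasurableSet[Fs i] (As i))
    (hT : Tendsto (fun i => μ (As i ∆ A)) l (𝓝 0)) (c : E) :
    Tendsto (fun i => eLpNorm (μ[A.indicator (fun _ => c)|Fs i] - A.indicator (fun _ => c)) p μ)
      l (𝓝 0) := by
  have hp0 : p ≠ 0 := (zero_lt_one.trans_le hp).ne'
  have hbound : ∀ i, eLpNorm (μ[A.indicator (fun _ => c)|Fs i] - A.indicator (fun _ => c)) p μ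
      ≤ 2 * (‖c‖ₑ * μ (As i ∆ A) ^ (1 / p.toReal)) := fun i => by
    have hAsi : MeasurableSet (As i) := hle i _ (hAs i)
    calc eLpNorm (μ[A.indicator (fun _ => c)|Fs i] - A.indicator (fun _ => c)) p μ
        ≤ 2 * eLpNorm (A.indicator (fun _ => c) - (As i).indicator (fun _ => c)) p μ :=
          eLpNorm_condExp_sub_le_of_stronglyMeasurable (hle i) hp
            ((integrable_const c).indicator hA) ((integrable_const c).indicator hAsi)
            (stronglyMeasurable_const.indicator (hAs i))
      _ = 2 * (‖c‖ₑ * μ (As i ∆ A) ^ (1 / p.toReal)) := by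
          rw [eLpNorm_sub_comm, eLpNorm_indicator_sub_indicator,
            eLpNorm_indicator_const (hAsi.symmDiff hA) hp0 hp_top]
  have hlim : Tendsto (fun i => 2 * (‖c‖ₑ * μ (As i ∆ A) ^ (1 / p.toReal))) l (𝓝 0) := by
    have hexp : 0 < 1 / p.toReal := one_div_pos.2 (ENNReal.toReal_pos hp0 hp_top)
    have hpow := hT.ennrpow_const (1 / p.toReal)
    rw [ENNReal.zero_rpow_of_pos hexp] at hpow
    simpa using ENNReal.Tendsto.const_mul (a := 2)
      (ENNReal.Tendsto.const_mul (a := ‖c‖ₑ) hpow (Or.inr enorm_ne_top)) (Or.inr ofNat_ne_top)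
  exact tendsto_of_tendsto_of_tendsto_of_le_of_le tendsto_const_nhds hlim (fun _ => zero_le)
    hbound

theorem tendsto_eLpNorm_condExp_sub_of_approx {f : Ω → E} (hp : 1 ≤ p) (hf : Integrable f μ)
    (happrox : ∀ ε ≠ 0, ∃ g, eLpNorm (f - g) p μ ≤ ε ∧ Integrable g μ ∧
      Tendsto (fun i => eLpNorm (μ[g|Fs i] - g) p μ) l (𝓝 0)) :
    Tendsto (fun i => eLpNorm (μ[f|Fs i] - f) p μ) l (𝓝 0) := by
  refine ENNReal.tendsto_nhds_zero.2 fun ε hε => ?_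
  have hε3 : ε / 3 ≠ 0 := ENNReal.div_ne_zero.2 ⟨hε.ne', ofNat_ne_top⟩
  obtain ⟨g, hfg, hg, hgt⟩ := happrox (ε / 3) hε3
  filter_upwards [ENNReal.tendsto_nhds_zero.1 hgt (ε / 3) (pos_iff_ne_zero.2 hε3)] with i hi
  calc eLpNorm (μ[f|Fs i] - f) p μ
      ≤ eLpNorm (μ[g|Fs i] - g) p μ + 2 * eLpNorm (f - g) p μ :=
        eLpNorm_condExp_sub_le_add hp hf hg
    _ ≤ ε / 3 + 2 * (ε / 3) := by gcongr
    _ = ε := by rw [two_mul, ← add_assoc, ENNReal.add_thirds]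

theorem tendsto_eLpNorm_condExp_sub_of_forall_exists_tendsto_measure_symmDiff
    [IsFiniteMeasure μ] (hle : ∀ i, Fs i ≤ m0) (hp : 1 ≤ p) (hp_top : p ≠ ⊤)
    (hsets : ∀ A : Set Ω, MeasurableSet A → ∃ As : ι → Set Ω,
      (∀ i, MeasurableSet[Fs i] (As i)) ∧ Tendsto (fun i => μ (As i ∆ A)) l (𝓝 0))
    {f : Ω → E} (hf : MemLp f p μ) :
    Tendsto (fun i => eLpNorm (μ[f|Fs i] - f) p μ) l (𝓝 0) := by
  let P : (Ω → E) → Prop := fun g =>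
    Integrable g μ ∧ Tendsto (fun i => eLpNorm (μ[g|Fs i] - g) p μ) l (𝓝 0)
  have hind : ∀ (c : E) ⦃s : Set Ω⦄, MeasurableSet s → P (s.indicator fun _ => c) := by
    intro c s hs
    obtain ⟨As, hAs, hT⟩ := hsets s hs
    exact ⟨(integrable_const c).indicator hs,
      tendsto_eLpNorm_condExp_sub_indicator hle hp hp_top hs hAs hT c⟩
  have hadd : ∀ g₁ g₂, P g₁ → P g₂ → P (g₁ + g₂) := by
    rintro g₁ g₂ ⟨hg₁, ht₁⟩ ⟨hg₂, ht₂⟩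
    refine ⟨hg₁.add hg₂, tendsto_of_tendsto_of_tendsto_of_le_of_le tendsto_const_nhds ?_
      (fun _ => zero_le) fun _ => eLpNorm_condExp_add_sub_le hp hg₁ hg₂⟩
    simpa using ht₁.add ht₂
  refine tendsto_eLpNorm_condExp_sub_of_approx hp (hf.integrable hp) fun ε hε => ?_
  obtain ⟨g, hfg, hg⟩ := hf.induction_dense hp_top P
    (fun c s hs _ _ _ => ⟨s.indicator fun _ => c, by simp, hind c hs⟩) hadd
    (fun g hg => hg.1.aestronglyMeasurable) hε
  exact ⟨g, hfg, hg⟩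

end CondExpError

theorem tendsto_measure_symmDiff_of_tendstoInMeasure_indicator {Ω ι : Type*}
    {m0 : MeasurableSpace Ω} {μ : Measure Ω} {l : Filter ι} {h : ι → Ω → ℝ} {A : Set Ω}
    (hlim : TendstoInMeasure μ h l (A.indicator fun _ => 1)) :
    Tendsto (fun i => μ ({ω | 1 / 2 ≤ h i ω} ∆ A)) l (𝓝 0) := by
  have hsub : ∀ i, {ω | 1 / 2 ≤ h i ω} ∆ A
      ⊆ {ω | ENNReal.ofReal (1 / 2) ≤ edist (h i ω) (A.indicator (fun _ => 1) ω)} := by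
    intro i ω hω
    simp only [Set.mem_ofPred_eq, edist_dist, Real.dist_eq]
    refine ENNReal.ofReal_le_ofReal ?_
    rcases Set.mem_symmDiff.1 hω with ⟨hhalf, hA⟩ | ⟨hA, hhalf⟩
    · rw [Set.indicator_of_notMem hA, sub_zero]
      exact hhalf.trans (le_abs_self _)
    · rw [Set.indicator_of_mem hA, abs_sub_comm]
      simp only [Set.mem_ofPred_eq, not_le] at hhalf
      exact (by linarith : (1 : ℝ) / 2 ≤ 1 - h i ω).trans (le_abs_self _)
  exact tendsto_of_tendsto_of_tendsto_of_le_of_le tendsto_const_nhds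
    (hlim _ (ENNReal.ofReal_pos.2 one_half_pos)) (fun _ => zero_le) fun i => measure_mono (hsub i)

end MeasureTheory

open MeasureTheory

/-- Convergence of conditional expectations along a sequence of sub-σ-algebras:
`E[f | Fs_n] → f` in every `L^p`, `p ∈ [1,∞)`, if and only if every measurable set
can be approximated in measure by sets in `Fs_n`. -/
theorem condexp_Lp_convergence_iff_set_approx
    {Ω : Type*} {m0 : MeasurableSpace Ω} (μ : Measure Ω) [IsProbabilityMeasure μ]
    (Fs : ℕ → MeasurableSpace Ω) (hle : ∀ n, Fs n ≤ m0) :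
    (∀ p : ℝ≥0∞, 1 ≤ p → p ≠ ⊤ → ∀ f : Ω → ℝ, MemLp f p μ →
        Tendsto (fun n => eLpNorm (μ[f|Fs n] - f) p μ) atTop (𝓝 0))
    ↔ (∀ A : Set Ω, MeasurableSet A →
        ∃ As : ℕ → Set Ω, (∀ n, MeasurableSet[Fs n] (As n)) ∧
          Tendsto (fun n => μ (symmDiff (As n) A)) atTop (𝓝 0)) := by
  refine ⟨fun hLp A hA => ?_, fun hsets p hp hp_top f hf =>
    tendsto_eLpNorm_condExp_sub_of_forall_exists_tendsto_measure_symmDiff hle hp hp_top hsets hf⟩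
  set χ : Ω → ℝ := A.indicator fun _ => 1
  have hL1 := hLp 1 le_rfl one_ne_top χ ((memLp_const 1).indicator hA)
  refine ⟨fun n => {ω | 1 / 2 ≤ μ[χ|Fs n] ω},
    fun n => stronglyMeasurable_condExp.measurable measurableSet_Ici, ?_⟩
  exact tendsto_measure_symmDiff_of_tendstoInMeasure_indicator <|
    tendstoInMeasure_of_tendsto_eLpNorm one_ne_zero
      (fun _ => integrable_condExp.aestronglyMeasurable) (aestronglyMeasurable_const.indicator hA) hL1
end
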